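/- The partial transpose (on the second subsystem) of the matrix ρ = ρ̄₁ − S·√(γ(1−γ))·(|01⟩⟨10| + |10⟩⟨01|), where ρ̄₁ = |κ₁⟩⟨κ₁| with |κ₁⟩ = √γ|01⟩ + √(1−γ)|10⟩, has a negative eigenvalue equal to −√(γ(1−γ))·(1 − S) whenever 0 < γ < 1 and 0 ≤ S < 1. -/
import Mathlib


open scoped BigOperators Matrix

namespace SSDSE11

noncomputable def kappa1 (γ : ℝ) : Fin 2 × Fin 2 → ℂ :=
  fun p => if p = (0, 1) then (Real.sqrt γ : ℂ)
    else if p = (1, 0) then (Real.sqrt (1 - γ) : ℂ) else 0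

def ketbra (p q : Fin 2 × Fin 2) : Matrix (Fin 2 × Fin 2) (Fin 2 × Fin 2) ℂ :=
  fun r s => if r = p ∧ s = q then 1 else 0

/-- Partial transpose on the second subsystem: |ij⟩⟨kl| ↦ |il⟩⟨kj|. -/
def partialTranspose (M : Matrix (Fin 2 × Fin 2) (Fin 2 × Fin 2) ℂ) :
    Matrix (Fin 2 × Fin 2) (Fin 2 × Fin 2) ℂ :=
  fun p q => M (p.1, q.2) (q.1, p.2)

theorem negative_eigenvalue_of_partial_transpose (γ S : ℝ)
    (hγ : γ ∈ Set.Ioo (0:ℝ) 1) (hS : S ∈ Set.Ico (0:ℝ) 1) :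
    (-(Real.sqrt (γ * (1 - γ)) * (1 - S)) < 0) ∧
    ∃ v : Fin 2 × Fin 2 → ℂ, v ≠ 0 ∧
      (partialTranspose
          (Matrix.vecMulVec (kappa1 γ) (star (kappa1 γ))
            - ((S * Real.sqrt (γ * (1 - γ)) : ℝ) : ℂ) •
                (ketbra (0, 1) (1, 0) + ketbra (1, 0) (0, 1)))).mulVec v
        = ((-(Real.sqrt (γ * (1 - γ)) * (1 - S)) : ℝ) : ℂ) • v := by
  obtain ⟨hγ0, hγ1⟩ := hγ
  obtain ⟨hS0, hS1⟩ := hS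
  have hsq : Real.sqrt (γ * (1 - γ)) = Real.sqrt γ * Real.sqrt (1 - γ) :=
    Real.sqrt_mul hγ0.le _
  have hpos : 0 < Real.sqrt (γ * (1 - γ)) :=
    Real.sqrt_pos.mpr (mul_pos hγ0 (by linarith))
  constructor
  · nlinarith
  · refine ⟨fun p => if p = (0,0) then 1 else if p = (1,1) then -1 else 0, ?_, ?_⟩
    · intro h
      have := congrFun h (0,0)
      simp at this
    · funext p
      fin_cases p <;>
        simp [Matrix.mulVec, dotProduct, Fintype.sum_prod_type, Fin.sum_univ_two,
          partialTranspose, Matrix.vecMulVec, kappa1, ketbra, Prod.ext_iff, hsq] <;> ring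

end SSDSE11
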